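/- Consider an assignment problem with n agents and 3n objects where all agents have identical utilities given by positive integers w_1, …, w_{3n} with W/4 < w_j < W/2 for every j and Σ_{j=1}^{3n} w_j = nW. Then there exists a complete discrete CEEI-DISC assignment if and only if {1,…,3n} can be partitioned into n disjoint sets E_1, …, E_n with Σ_{j∈E_i} w_j = W for every i (i.e., the 3-Partition instance is a yes-instance). -/

import Mathlib

open Finset

/-- Utility an agent with (row) utility function `ui` derives from a (row) allocation `xi`. -/
noncomputable def utilOf {m : ℕ} (ui : Fin m → ℝ) (xi : Fin m → ℝ) : ℝ :=
  ∑ j, xi j * ui j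

/-- A complete fractional assignment: entries in [0,1], every column (object) fully allocated. -/
def IsFracAssignment {n m : ℕ} (x : Fin n → Fin m → ℝ) : Prop :=
  (∀ i j, 0 ≤ x i j ∧ x i j ≤ 1) ∧ (∀ j, ∑ i, x i j = 1)

/-- A complete discrete assignment: entries in {0,1}, every column (object) fully allocated. -/
def IsDiscreteAssignment {n m : ℕ} (x : Fin n → Fin m → ℝ) : Prop :=
  (∀ i j, x i j = 0 ∨ x i j = 1) ∧ (∀ j, ∑ i, x i j = 1)

/-- `x` is a CEEI-DISC assignment witnessed by the price vector `p`: prices are nonnegative,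
and every agent's bundle is a discrete bundle of price at most 1 that maximizes the agent's
utility among all discrete bundles of price at most 1. -/
noncomputable def CEEIDiscWith {n m : ℕ} (u : Fin n → Fin m → ℝ)
    (x : Fin n → Fin m → ℝ) (p : Fin m → ℝ) : Prop :=
  (∀ j, 0 ≤ p j) ∧
  ∀ i, (∀ j, x i j = 0 ∨ x i j = 1) ∧ (∑ j, x i j * p j ≤ 1) ∧
    ∀ y : Fin m → ℝ, (∀ j, y j = 0 ∨ y j = 1) → (∑ j, y j * p j ≤ 1) →
      utilOf (u i) y ≤ utilOf (u i) (x i)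

noncomputable def CEEIDisc {n m : ℕ} (u : Fin n → Fin m → ℝ)
    (x : Fin n → Fin m → ℝ) : Prop :=
  ∃ p : Fin m → ℝ, CEEIDiscWith u x p

/-- `x` is a CEEI-FRAC assignment witnessed by the price vector `p`: prices are nonnegative,
and every agent's bundle lies in [0,1]^m, costs at most 1, and maximizes the agent's utility
among all fractional bundles of price at most 1. -/
noncomputable def CEEIFracWith {n m : ℕ} (u : Fin n → Fin m → ℝ)
    (x : Fin n → Fin m → ℝ) (p : Fin m → ℝ) : Prop :=
  (∀ j, 0 ≤ p j) ∧
  ∀ i, (∀ j, 0 ≤ x i j ∧ x i j ≤ 1) ∧ (∑ j, x i j * p j ≤ 1) ∧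
    ∀ y : Fin m → ℝ, (∀ j, 0 ≤ y j ∧ y j ≤ 1) → (∑ j, y j * p j ≤ 1) →
      utilOf (u i) y ≤ utilOf (u i) (x i)

noncomputable def CEEIFrac {n m : ℕ} (u : Fin n → Fin m → ℝ)
    (x : Fin n → Fin m → ℝ) : Prop :=
  ∃ p : Fin m → ℝ, CEEIFracWith u x p

/-- The Nash welfare of an assignment. -/
noncomputable def nash {n m : ℕ} (u : Fin n → Fin m → ℝ)
    (x : Fin n → Fin m → ℝ) : ℝ :=
  ∏ i, utilOf (u i) (x i)

/-! With identical utilities every agent can afford every other agent's bundle, so a CEEI-DISC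
assignment is envy-free; hence all bundles have the same value, which must be `W` because the
values add up to `n * W`. Conversely, for a partition into bundles of value `W`, the prices
`w j / W` make every bundle cost exactly `1`, and then any affordable bundle is worth at most `W`. -/

variable {n m : ℕ}

theorem utilOf_indicator (v : Fin m → ℝ) (s : Finset (Fin m)) :
    utilOf v (fun j => if j ∈ s then 1 else 0) = ∑ j ∈ s, v j := by
  simp [utilOf, ite_mul, sum_ite_mem]

def bundleAssignment (E : Fin n → Finset (Fin m)) : Fin n → Fin m → ℝ :=
  fun i j => if j ∈ E i then 1 else 0

theorem utilOf_bundleAssignment (v : Fin m → ℝ) (E : Fin n → Finset (Fin m)) (i : Fin n) :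
    utilOf v (bundleAssignment E i) = ∑ j ∈ E i, v j :=
  utilOf_indicator v (E i)

noncomputable def bundles (x : Fin n → Fin m → ℝ) (i : Fin n) : Finset (Fin m) :=
  {j | x i j = 1}

theorem utilOf_of_zero_or_one (v y : Fin m → ℝ) (hy : ∀ j, y j = 0 ∨ y j = 1) :
    utilOf v y = ∑ j ∈ {j | y j = 1}, v j := by
  rw [← utilOf_indicator]
  congr 1
  funext j
  rcases hy j with h | h <;> simp [h]

namespace IsDiscreteAssignment

variable {x : Fin n → Fin m → ℝ}

theorem existsUnique_eq_one (hx : IsDiscreteAssignment x) (j : Fin m) : ∃! i, x i j = 1 := by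
  have hcard : #{i | x i j = 1} = 1 := by
    have h : utilOf (fun _ => 1) (x · j) = 1 := by simpa [utilOf] using hx.2 j
    rw [utilOf_of_zero_or_one _ _ (hx.1 · j)] at h
    simpa using h
  obtain ⟨i, hi⟩ := card_eq_one.mp hcard
  exact ⟨i, by simpa using hi.ge (mem_singleton_self i),
    fun k hk => mem_singleton.mp (hi ▸ mem_filter.mpr ⟨mem_univ k, hk⟩)⟩

theorem disjoint_bundles (hx : IsDiscreteAssignment x) {i k : Fin n} (hik : i ≠ k) :
    Disjoint (bundles x i) (bundles x k) := by
  simp only [bundles, disjoint_left, mem_filter, mem_univ, true_and]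
  exact fun {j} hi hk => hik ((hx.existsUnique_eq_one j).unique hi hk)

theorem exists_mem_bundles (hx : IsDiscreteAssignment x) (j : Fin m) :
    ∃ i, j ∈ bundles x i := by
  simpa [bundles] using (hx.existsUnique_eq_one j).exists

end IsDiscreteAssignment

theorem sum_utilOf_eq_sum (v : Fin m → ℝ) {x : Fin n → Fin m → ℝ} (hcol : ∀ j, ∑ i, x i j = 1) :
    ∑ i, utilOf v (x i) = ∑ j, v j := by
  simp only [utilOf]
  rw [sum_comm]
  simp [← sum_mul, hcol]

/-- Envy-freeness: every agent can afford every other agent's bundle. -/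
theorem CEEIDiscWith.utilOf_le {v p : Fin m → ℝ} {x : Fin n → Fin m → ℝ}
    (h : CEEIDiscWith (fun _ => v) x p) (i k : Fin n) : utilOf v (x k) ≤ utilOf v (x i) :=
  (h.2 i).2.2 (x k) (h.2 k).1 (h.2 k).2.1

theorem CEEIDiscWith.utilOf_eq_of_sum_eq {v p : Fin m → ℝ} {x : Fin n → Fin m → ℝ} {W : ℝ}
    (hcol : ∀ j, ∑ i, x i j = 1) (h : CEEIDiscWith (fun _ => v) x p)
    (hsum : ∑ j, v j = n * W) (i : Fin n) : utilOf v (x i) = W := by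
  have hconst : ∑ k, utilOf v (x k) = n * utilOf v (x i) := by
    simp [fun k => le_antisymm (h.utilOf_le i k) (h.utilOf_le k i)]
  rw [sum_utilOf_eq_sum v hcol, hsum] at hconst
  exact (mul_left_cancel₀ (Nat.cast_ne_zero.mpr (Fin.pos i).ne') hconst).symm

theorem isDiscreteAssignment_bundleAssignment {E : Fin n → Finset (Fin m)}
    (hdisj : ∀ i k, i ≠ k → Disjoint (E i) (E k)) (hcov : ∀ j, ∃ i, j ∈ E i) :
    IsDiscreteAssignment (bundleAssignment E) := by
  refine ⟨fun i j => by unfold bundleAssignment; split_ifs <;> simp, fun j => ?_⟩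
  obtain ⟨i, hi⟩ := hcov j
  have hunique : ∀ k, j ∈ E k ↔ k = i := fun k =>
    ⟨fun hk => by_contra fun hki => disjoint_left.mp (hdisj k i hki) hk hi, fun h => h ▸ hi⟩
  simp [bundleAssignment, hunique]

/-- When `W = 0` all utilities vanish, and the junk prices `v j / 0 = 0` still work. -/
theorem ceeiDiscWith_bundleAssignment {v : Fin m → ℝ} (hv : ∀ j, 0 ≤ v j) {W : ℝ}
    {E : Fin n → Finset (Fin m)} (hcov : ∀ j, ∃ i, j ∈ E i) (hE : ∀ i, ∑ j ∈ E i, v j = W) :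
    CEEIDiscWith (fun _ => v) (bundleAssignment E) (fun j => v j / W) := by
  have hvW : ∀ j, v j ≤ W := fun j => by
    obtain ⟨i, hi⟩ := hcov j
    exact hE i ▸ single_le_sum (fun k _ => hv k) hi
  refine ⟨fun j => div_nonneg (hv j) ((hv j).trans (hvW j)), fun i => ⟨?_, ?_, ?_⟩⟩
  · intro j
    unfold bundleAssignment
    split_ifs <;> simp
  · change utilOf _ _ ≤ 1
    rw [utilOf_bundleAssignment, ← sum_div, hE i]
    exact div_self_le_one W
  · intro y _ hy
    change utilOf _ _ ≤ 1 at hy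
    rw [utilOf_bundleAssignment, hE i]
    have hW : 0 ≤ W := hE i ▸ sum_nonneg fun j _ => hv j
    calc utilOf v y = W * utilOf (fun j => v j / W) y := by
          simp only [utilOf, mul_sum, mul_left_comm W]
          congr! with j
          exact (mul_div_cancel_of_imp' fun h => le_antisymm (h ▸ hvW j) (hv j)).symm
      _ ≤ W * 1 := mul_le_mul_of_nonneg_left hy hW
      _ = W := mul_one W

theorem ceei_disc_iff_three_partition_general (n W : ℕ) (w : Fin (3 * n) → ℕ)
    (hsum : ∑ j, w j = n * W)
    (u : Fin n → Fin (3 * n) → ℝ) (hu : ∀ i j, u i j = (w j : ℝ)) :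
    (∃ x : Fin n → Fin (3 * n) → ℝ, IsDiscreteAssignment x ∧ CEEIDisc u x) ↔
      (∃ E : Fin n → Finset (Fin (3 * n)),
        (∀ i k, i ≠ k → Disjoint (E i) (E k)) ∧
        (∀ j, ∃ i, j ∈ E i) ∧
        (∀ i, ∑ j ∈ E i, w j = W)) := by
  obtain rfl : u = fun _ j => (w j : ℝ) := funext₂ hu
  constructor
  · rintro ⟨x, hx, p, hp⟩
    refine ⟨bundles x, fun i k => hx.disjoint_bundles, hx.exists_mem_bundles, fun i => ?_⟩
    have hi := hp.utilOf_eq_of_sum_eq hx.2 (W := W) (by exact_mod_cast hsum) i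
    rw [utilOf_of_zero_or_one _ _ (hx.1 i)] at hi
    exact_mod_cast hi
  · rintro ⟨E, hdisj, hcov, hE⟩
    exact ⟨bundleAssignment E, isDiscreteAssignment_bundleAssignment hdisj hcov, _,
      ceeiDiscWith_bundleAssignment (W := W) (fun j => Nat.cast_nonneg _) hcov
        (fun i => by exact_mod_cast hE i)⟩

/-- 3-Partition reduction: with n agents having identical integer utilities over 3n objects
(each weight strictly between W/4 and W/2, total weight nW), a complete discrete CEEI-DISC
assignment exists iff the 3-Partition instance is a yes-instance. -/
theorem ceei_disc_iff_three_partition (n W : ℕ) (w : Fin (3 * n) → ℕ)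
    (hw : ∀ j, 0 < w j)
    (hbound : ∀ j, W < 4 * w j ∧ 2 * w j < W)
    (hsum : ∑ j, w j = n * W)
    (u : Fin n → Fin (3 * n) → ℝ) (hu : ∀ i j, u i j = (w j : ℝ)) :
    (∃ x : Fin n → Fin (3 * n) → ℝ, IsDiscreteAssignment x ∧ CEEIDisc u x) ↔
      (∃ E : Fin n → Finset (Fin (3 * n)),
        (∀ i k, i ≠ k → Disjoint (E i) (E k)) ∧
        (∀ j, ∃ i, j ∈ E i) ∧
        (∀ i, ∑ j ∈ E i, w j = W)) :=
  ceei_disc_iff_three_partition_general n W w hsum u hu
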